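/- arXiv:2212.14833 — 7 statements merged into one kernel-verified Lean document; each statement's English description precedes it below -/
import Mathlib

section
/- If u = (u_1,...,u_n) and v = (v_1,...,v_n) are sequences of positive integers each satisfying the condition that for all i < n and all j with i - u_i + 1 ≤ j < i one has i - j ≤ u_i - u_j, and u_n = v_n = n, then the coordinate-wise minimum w_i := min(u_i, v_i) also satisfies this condition. -/
/-- A weight sequence of length `n` (Pallo): positive integers `w 1, …, w n` with
`w n = n` satisfying the slope condition `i - j ≤ w i - w j` for all `i < n` and
`i - w i + 1 ≤ j < i`. -/
def IsWeightSeq (n : ℕ) (w : ℕ → ℤ) : Prop :=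
  (∀ j : ℕ, 1 ≤ j → j ≤ n → 1 ≤ w j) ∧ w n = (n : ℤ) ∧
    ∀ i j : ℕ, 1 ≤ j → i < n → (i : ℤ) - w i + 1 ≤ (j : ℤ) → j < i →
      (i : ℤ) - (j : ℤ) ≤ w i - w j

/-- the coordinate-wise minimum of two weight sequences is again a
weight sequence. -/
theorem stmt1 (n : ℕ) (u v : ℕ → ℤ)
    (hu : IsWeightSeq n u) (hv : IsWeightSeq n v) :
    IsWeightSeq n (fun i => min (u i) (v i)) := by
  obtain ⟨hu1, hu2, hu3⟩ := hu
  obtain ⟨hv1, hv2, hv3⟩ := hv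
  refine ⟨fun j h1 h2 => le_min (hu1 j h1 h2) (hv1 j h1 h2),
    by simp [hu2, hv2], fun i j h1 h2 h3 h4 => ?_⟩
  simp only at h3 ⊢
  rcases min_cases (u i) (v i) with ⟨hm, _⟩ | ⟨hm, _⟩
  · rw [hm] at h3 ⊢
    have := hu3 i j h1 h2 h3 h4
    have : min (u j) (v j) ≤ u j := min_le_left _ _
    omega
  · rw [hm] at h3 ⊢
    have := hv3 i j h1 h2 h3 h4
    have : min (u j) (v j) ≤ v j := min_le_right _ _
    omega
end

section
/- For weight sequences b, c ∈ W(n), a ∈ W(m), and 1 ≤ i ≤ n, one has (b ∧ c) ∘_i a = (b ∘_i a) ∧ (c ∘_i a), where ∧ is the coordinate-wise minimum. -/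
/-- Partial composition of weight sequences (grafting of planar binary trees):
`u ∘ᵢ v = (u 1, …, u (i-1), v 1, …, v (n-1), u i', …, u m')` where
`u j' = u j + n - 1` if `u j ≥ j - i + 1` and `u j' = u j` otherwise. -/
def wcomp (m n i : ℕ) (u v : ℕ → ℤ) : ℕ → ℤ := fun k =>
  if k < i then u k
  else if k < i + n - 1 then v (k - i + 1)
  else if ((k - n + 1 : ℕ) : ℤ) - (i : ℤ) + 1 ≤ u (k - n + 1)
    then u (k - n + 1) + (n : ℤ) - 1
    else u (k - n + 1)

/-- `(b ⊓ c) ∘ᵢ a = (b ∘ᵢ a) ⊓ (c ∘ᵢ a)` for weight sequences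
`b, c ∈ W(n)`, `a ∈ W(m)`, `1 ≤ i ≤ n`, with coordinate-wise minimum. -/
theorem stmt5 (m n i : ℕ) (a b c : ℕ → ℤ)
    (ha : IsWeightSeq m a) (hb : IsWeightSeq n b) (hc : IsWeightSeq n c)
    (hi1 : 1 ≤ i) (hin : i ≤ n) :
    ∀ k : ℕ, 1 ≤ k → k ≤ n + m - 1 →
      wcomp n m i (fun t => min (b t) (c t)) a k
        = min (wcomp n m i b a k) (wcomp n m i c a k) := by
  intro k _ _
  unfold wcomp
  by_cases h1 : k < i
  · simp [h1]
  by_cases h2 : k < i + m - 1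
  · simp [h1, h2]
  · set j := k - m + 1 with hj
    rcases le_or_gt ((j : ℤ) - i + 1) (b j) with hbj | hbj <;>
      rcases le_or_gt ((j : ℤ) - i + 1) (c j) with hcj | hcj
    · simp only [h1, h2, if_false, le_min_iff, hbj, hcj, and_self, if_true]
      omega
    · have hm : ((j : ℤ) - i + 1) ≤ min (b j) (c j) ↔ False := by
        simp [le_min_iff]; intro _; linarith
      have : min (b j + (m : ℤ) - 1) (c j) = c j :=
        min_eq_right (by have : (0:ℤ) ≤ (m:ℤ) := Int.natCast_nonneg m; linarith)
      simp only [h1, h2, if_false, hm, if_true, hbj, not_le.mpr hcj]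
      omega
    · have hm : ((j : ℤ) - i + 1) ≤ min (b j) (c j) ↔ False := by
        simp [le_min_iff]; intro h; linarith
      have : min (b j) (c j + (m : ℤ) - 1) = b j :=
        min_eq_left (by have : (0:ℤ) ≤ (m:ℤ) := Int.natCast_nonneg m; linarith)
      simp only [h1, h2, if_false, hm, if_true, hcj, not_le.mpr hbj]
      omega
    · have hm : ((j : ℤ) - i + 1) ≤ min (b j) (c j) ↔ False := by
        simp [le_min_iff]; intro h; linarith
      simp only [h1, h2, if_false, hm, if_true, not_le.mpr hbj, not_le.mpr hcj]
end

section
/- Let m, n ≥ 1, a ∈ S_m, b ∈ S_n, 1 ≤ i ≤ m, and let a ∘_i b be the permutation of [m+n-1] obtained by substitution (one-line notation: replace a_i by the block b_1 + a_i - 1, ..., b_n + a_i - 1 and increment all a_k > a_i by n-1). Then the inversion set Inv(a ∘_i b) is the disjoint union of: {(p',q') : (p,q) ∈ Inv(a), p ≠ a_i, q ≠ a_i}, {(p + n - 1, k + a_i - 1) : (p, a_i) ∈ Inv(a), 1 ≤ k ≤ n}, {(k + a_i - 1, q) : (a_i, q) ∈ Inv(a), 1 ≤ k ≤ n}, and {(p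 + a_i - 1, q + a_i - 1) : (p,q) ∈ Inv(b)}, where t' = t + n - 1 if t > a_i and t' = t otherwise. -/
/-- `a` is the one-line notation of a permutation of `{1,…,m}`:
it maps `{1,…,m}` into itself injectively. -/
def OneLine (m : ℕ) (a : ℕ → ℕ) : Prop :=
  (∀ k : ℕ, 1 ≤ k → k ≤ m → 1 ≤ a k ∧ a k ≤ m) ∧
  (∀ k l : ℕ, 1 ≤ k → k ≤ m → 1 ≤ l → l ≤ m → a k = a l → k = l)

/-- The substitution composition of the permutations operad in one-line
notation: replace the value `a i` by the block `b₁+aᵢ-1, …, b_n+aᵢ-1`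
and increment every `a k > a i` by `n - 1`. -/
def pcomp (n i : ℕ) (a b : ℕ → ℕ) : ℕ → ℕ := fun k =>
  if k < i then (if a i < a k then a k + n - 1 else a k)
  else if k ≤ i + n - 1 then b (k - i + 1) + a i - 1
  else (if a i < a (k - n + 1) then a (k - n + 1) + n - 1 else a (k - n + 1))

/-- The inversion set of a one-line permutation of `{1,…,m}`:
`Inv(a) = {(a k, a l) : k < l, a k > a l}`. -/
def invSet (m : ℕ) (a : ℕ → ℕ) : Set (ℕ × ℕ) :=
  {pq | ∃ k l : ℕ, 1 ≤ k ∧ k < l ∧ l ≤ m ∧ a k = pq.1 ∧ a l = pq.2 ∧ pq.2 < pq.1}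

/-- description of the inversion set of `a ∘ᵢ b` as a disjoint
union of four sets (Lemma on inversions in the permutations operad). -/
theorem stmt12 (m n i : ℕ) (a b : ℕ → ℕ)
    (ha : OneLine m a) (hb : OneLine n b) (hi1 : 1 ≤ i) (him : i ≤ m)
    (A₁ A₂ A₃ B : Set (ℕ × ℕ))
    (hA₁ : A₁ = {x | ∃ p q : ℕ, (p, q) ∈ invSet m a ∧ p ≠ a i ∧ q ≠ a i ∧
      x = ((if a i < p then p + n - 1 else p), (if a i < q then q + n - 1 else q))})
    (hA₂ : A₂ = {x | ∃ p : ℕ, (p, a i) ∈ invSet m a ∧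
      ∃ k : ℕ, 1 ≤ k ∧ k ≤ n ∧ x = (p + n - 1, k + a i - 1)})
    (hA₃ : A₃ = {x | ∃ q : ℕ, (a i, q) ∈ invSet m a ∧
      ∃ k : ℕ, 1 ≤ k ∧ k ≤ n ∧ x = (k + a i - 1, q)})
    (hB : B = {x | ∃ p q : ℕ, (p, q) ∈ invSet n b ∧
      x = (p + a i - 1, q + a i - 1)}) :
    invSet (m + n - 1) (pcomp n i a b) = A₁ ∪ A₂ ∪ A₃ ∪ B ∧
      Disjoint A₁ A₂ ∧ Disjoint A₁ A₃ ∧ Disjoint A₁ B ∧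
      Disjoint A₂ A₃ ∧ Disjoint A₂ B ∧ Disjoint A₃ B := by
  have hA1le : 1 ≤ a i := (ha.1 i hi1 him).1
  have hne : ∀ k, 1 ≤ k → k ≤ m → k ≠ i → a k ≠ a i :=
    fun k h1 h2 h3 h => h3 (ha.2 k i h1 h2 hi1 him h)
  have hmono : ∀ s t : ℕ, s ≠ a i → t ≠ a i →
      (s < t ↔ (if a i < s then s + n - 1 else s) < (if a i < t then t + n - 1 else t)) := by
    intro s t hs ht
    split_ifs <;> omega
  have hsurj : ∀ j, 1 ≤ j → j ≤ n → ∃ r, 1 ≤ r ∧ r ≤ n ∧ b r = j := by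
    intro j hj1 hjn
    have H := Finset.surj_on_of_inj_on_of_card_le
      (s := Finset.Icc 1 n) (t := Finset.Icc 1 n)
      (fun x _ => b x)
      (fun x hx => Finset.mem_Icc.mpr
        (hb.1 x (Finset.mem_Icc.mp hx).1 (Finset.mem_Icc.mp hx).2))
      (fun x y hx hy h => by
        simp only [Finset.mem_Icc] at hx hy
        exact hb.2 x y hx.1 hx.2 hy.1 hy.2 h)
      le_rfl
    obtain ⟨r, hr, hrj⟩ := H j (Finset.mem_Icc.mpr ⟨hj1, hjn⟩)
    exact ⟨r, (Finset.mem_Icc.mp hr).1, (Finset.mem_Icc.mp hr).2, hrj.symm⟩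
  have hc_low : ∀ k, k < i →
      pcomp n i a b k = (if a i < a k then a k + n - 1 else a k) := by
    intro k hk; simp only [pcomp, if_pos hk]
  have hc_mid : ∀ j, 1 ≤ j → j ≤ n → pcomp n i a b (i + j - 1) = b j + a i - 1 := by
    intro j h1 h2
    have e1 : ¬ (i + j - 1 < i) := by omega
    have e2 : i + j - 1 ≤ i + n - 1 := by omega
    have e3 : i + j - 1 - i + 1 = j := by omega
    simp only [pcomp, if_neg e1, if_pos e2, e3]
  have hc_high : ∀ k, i < k →
      pcomp n i a b (k + n - 1) = (if a i < a k then a k + n - 1 else a k) := by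
    intro k hk
    have e1 : ¬ (k + n - 1 < i) := by omega
    have e2 : ¬ (k + n - 1 ≤ i + n - 1) := by omega
    have e3 : k + n - 1 - n + 1 = k := by omega
    simp only [pcomp, if_neg e1, if_neg e2, e3]
  refine ⟨?_, ?_, ?_, ?_, ?_, ?_, ?_⟩
  · ext x
    simp only [invSet, Set.mem_setOf_eq, Set.mem_union]
    constructor
    · rintro ⟨k, l, hk1, hkl, hlN, hck, hcl, hxy⟩
      simp only [pcomp] at hck hcl
      by_cases hk_lo : k < i
      · rw [if_pos hk_lo] at hck
        by_cases hl_lo : l < i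
        · rw [if_pos hl_lo] at hcl
          refine Or.inl (Or.inl (Or.inl ?_))
          rw [hA₁]
          have hk_ne : a k ≠ a i := hne k hk1 (by omega) (by omega)
          have hl_ne : a l ≠ a i := hne l (by omega) (by omega) (by omega)
          exact ⟨a k, a l, ⟨k, l, hk1, hkl, by omega, rfl, rfl,
            (hmono (a l) (a k) hl_ne hk_ne).mpr (by rw [hck, hcl]; exact hxy)⟩,
            hk_ne, hl_ne, by rw [Prod.ext_iff]; exact ⟨hck.symm, hcl.symm⟩⟩
        · by_cases hl_mid : l ≤ i + n - 1
          · rw [if_neg hl_lo, if_pos hl_mid] at hcl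
            have hb1 : 1 ≤ b (l - i + 1) ∧ b (l - i + 1) ≤ n :=
              hb.1 _ (by omega) (by omega)
            have hk_ne : a k ≠ a i := hne k hk1 (by omega) (by omega)
            have hka : a i < a k := by
              rcases lt_or_gt_of_ne hk_ne with h | h
              · rw [if_neg (by omega)] at hck; omega
              · exact h
            rw [if_pos hka] at hck
            refine Or.inl (Or.inl (Or.inr ?_))
            rw [hA₂]
            exact ⟨a k, ⟨k, i, hk1, hk_lo, him, rfl, rfl, hka⟩,
              b (l - i + 1), hb1.1, hb1.2,
              by rw [Prod.ext_iff]; exact ⟨hck.symm, hcl.symm⟩⟩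
          · rw [if_neg hl_lo, if_neg hl_mid] at hcl
            refine Or.inl (Or.inl (Or.inl ?_))
            rw [hA₁]
            have hli : i < l - n + 1 := by omega
            have hlm' : l - n + 1 ≤ m := by omega
            have hk_ne : a k ≠ a i := hne k hk1 (by omega) (by omega)
            have hl_ne : a (l - n + 1) ≠ a i := hne _ (by omega) hlm' (by omega)
            exact ⟨a k, a (l - n + 1), ⟨k, l - n + 1, hk1, by omega, hlm', rfl, rfl,
              (hmono _ _ hl_ne hk_ne).mpr (by rw [hck, hcl]; exact hxy)⟩,
              hk_ne, hl_ne, by rw [Prod.ext_iff]; exact ⟨hck.symm, hcl.symm⟩⟩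
      · by_cases hk_mid : k ≤ i + n - 1
        · rw [if_neg hk_lo, if_pos hk_mid] at hck
          have hbk : 1 ≤ b (k - i + 1) ∧ b (k - i + 1) ≤ n :=
            hb.1 _ (by omega) (by omega)
          by_cases hl_mid : l ≤ i + n - 1
          · rw [if_neg (by omega : ¬ l < i), if_pos hl_mid] at hcl
            have hbl : 1 ≤ b (l - i + 1) ∧ b (l - i + 1) ≤ n :=
              hb.1 _ (by omega) (by omega)
            refine Or.inr ?_
            rw [hB]
            exact ⟨b (k - i + 1), b (l - i + 1),
              ⟨k - i + 1, l - i + 1, by omega, by omega, by omega, rfl, rfl, by omega⟩,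
              by rw [Prod.ext_iff]; exact ⟨hck.symm, hcl.symm⟩⟩
          · rw [if_neg (by omega : ¬ l < i), if_neg hl_mid] at hcl
            have hli : i < l - n + 1 := by omega
            have hlm' : l - n + 1 ≤ m := by omega
            have hl_ne : a (l - n + 1) ≠ a i := hne _ (by omega) hlm' (by omega)
            have hla : a (l - n + 1) < a i := by
              rcases lt_or_gt_of_ne hl_ne with h | h
              · exact h
              · rw [if_pos h] at hcl; omega
            rw [if_neg (by omega)] at hcl
            refine Or.inl (Or.inr ?_)
            rw [hA₃]
            exact ⟨a (l - n + 1), ⟨i, l - n + 1, hi1, hli, hlm', rfl, rfl, hla⟩,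
              b (k - i + 1), hbk.1, hbk.2,
              by rw [Prod.ext_iff]; exact ⟨hck.symm, hcl.symm⟩⟩
        · rw [if_neg hk_lo, if_neg hk_mid] at hck
          have hnl : ¬ l < i := by omega
          have hl_mid : ¬ l ≤ i + n - 1 := by omega
          rw [if_neg hnl, if_neg hl_mid] at hcl
          refine Or.inl (Or.inl (Or.inl ?_))
          rw [hA₁]
          have hki : i < k - n + 1 := by omega
          have hli : i < l - n + 1 := by omega
          have hk_ne : a (k - n + 1) ≠ a i := hne _ (by omega) (by omega) (by omega)
          have hl_ne : a (l - n + 1) ≠ a i := hne _ (by omega) (by omega) (by omega)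
          exact ⟨a (k - n + 1), a (l - n + 1),
            ⟨k - n + 1, l - n + 1, by omega, by omega, by omega, rfl, rfl,
              (hmono _ _ hl_ne hk_ne).mpr (by rw [hck, hcl]; exact hxy)⟩,
            hk_ne, hl_ne, by rw [Prod.ext_iff]; exact ⟨hck.symm, hcl.symm⟩⟩
    · rintro (((hx | hx) | hx) | hx)
      · rw [hA₁] at hx
        simp only [invSet, Set.mem_setOf_eq] at hx
        obtain ⟨p, q, ⟨k, l, hk1, hkl, hlm, hak, hal, hqp⟩, hp, hq, hxe⟩ := hx
        subst hak; subst hal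
        have hki : k ≠ i := fun h => hp (by rw [h])
        have hli : l ≠ i := fun h => hq (by rw [h])
        refine ⟨if k < i then k else k + n - 1, if l < i then l else l + n - 1,
          by split_ifs <;> omega, by split_ifs <;> omega, by split_ifs <;> omega,
          ?_, ?_, ?_⟩
        · split_ifs with h
          · rw [hc_low k h, hxe]
          · rw [hc_high k (by omega), hxe]
        · split_ifs with h
          · rw [hc_low l h, hxe]
          · rw [hc_high l (by omega), hxe]
        · rw [hxe]
          exact (hmono _ _ hq hp).mp hqp
      · rw [hA₂] at hx
        simp only [invSet, Set.mem_setOf_eq] at hx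
        obtain ⟨p, ⟨k, l, hk1, hkl, hlm, hak, hal, hqp⟩, j, hj1, hjn, hxe⟩ := hx
        have hli : l = i := ha.2 l i (by omega) hlm hi1 him hal
        subst hak
        obtain ⟨r, hr1, hrn, hbr⟩ := hsurj j hj1 hjn
        refine ⟨k, i + r - 1, hk1, by omega, by omega, ?_, ?_, ?_⟩
        · rw [hc_low k (by omega), if_pos hqp, hxe]
        · rw [hc_mid r hr1 hrn, hbr, hxe]
        · rw [hxe]
          show j + a i - 1 < a k + n - 1
          omega
      · rw [hA₃] at hx
        simp only [invSet, Set.mem_setOf_eq] at hx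
        obtain ⟨q, ⟨k, l, hk1, hkl, hlm, hak, hal, hqp⟩, j, hj1, hjn, hxe⟩ := hx
        have hki : k = i := ha.2 k i hk1 (by omega) hi1 him hak
        subst hal
        obtain ⟨r, hr1, hrn, hbr⟩ := hsurj j hj1 hjn
        refine ⟨i + r - 1, l + n - 1, by omega, by omega, by omega, ?_, ?_, ?_⟩
        · rw [hc_mid r hr1 hrn, hbr, hxe]
        · rw [hc_high l (by omega), if_neg (by omega), hxe]
        · rw [hxe]
          show a l < j + a i - 1
          omega
      · rw [hB] at hx
        simp only [invSet, Set.mem_setOf_eq] at hx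
        obtain ⟨p, q, ⟨k, l, hk1, hkl, hln, hbk, hbl, hqp⟩, hxe⟩ := hx
        subst hbk; subst hbl
        refine ⟨i + k - 1, i + l - 1, by omega, by omega, by omega, ?_, ?_, ?_⟩
        · rw [hc_mid k hk1 (by omega), hxe]
        · rw [hc_mid l (by omega) hln, hxe]
        · rw [hxe]
          show b l + a i - 1 < b k + a i - 1
          omega
  · rw [Set.disjoint_left]
    rintro x hx1 hx2
    rw [hA₁] at hx1; rw [hA₂] at hx2
    simp only [invSet, Set.mem_setOf_eq] at hx1 hx2
    obtain ⟨p, q, ⟨k, l, hk1, hkl, hlm, hak, hal, hqp⟩, hp, hq, hxe1⟩ := hx1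
    obtain ⟨p', ⟨k', l', hk1', hkl', hlm', hak', hal', hqp'⟩, j, hj1, hjn, hxe2⟩ := hx2
    rw [hxe1] at hxe2
    simp only [Prod.mk.injEq] at hxe2
    obtain ⟨h1, h2⟩ := hxe2
    split_ifs at h2 <;> omega
  · rw [Set.disjoint_left]
    rintro x hx1 hx2
    rw [hA₁] at hx1; rw [hA₃] at hx2
    simp only [invSet, Set.mem_setOf_eq] at hx1 hx2
    obtain ⟨p, q, ⟨k, l, hk1, hkl, hlm, hak, hal, hqp⟩, hp, hq, hxe1⟩ := hx1
    obtain ⟨q', ⟨k', l', hk1', hkl', hlm', hak', hal', hqp'⟩, j, hj1, hjn, hxe2⟩ := hx2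
    rw [hxe1] at hxe2
    simp only [Prod.mk.injEq] at hxe2
    obtain ⟨h1, h2⟩ := hxe2
    split_ifs at h1 <;> omega
  · rw [Set.disjoint_left]
    rintro x hx1 hx2
    rw [hA₁] at hx1; rw [hB] at hx2
    simp only [invSet, Set.mem_setOf_eq] at hx1 hx2
    obtain ⟨p, q, ⟨k, l, hk1, hkl, hlm, hak, hal, hqp⟩, hp, hq, hxe1⟩ := hx1
    obtain ⟨p', q', ⟨k', l', hk1', hkl', hln', hak', hal', hqp'⟩, hxe2⟩ := hx2
    have hp' : 1 ≤ p' ∧ p' ≤ n := hak' ▸ hb.1 k' hk1' (by omega)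
    rw [hxe1] at hxe2
    simp only [Prod.mk.injEq] at hxe2
    obtain ⟨h1, h2⟩ := hxe2
    split_ifs at h1 <;> omega
  · rw [Set.disjoint_left]
    rintro x hx1 hx2
    rw [hA₂] at hx1; rw [hA₃] at hx2
    simp only [invSet, Set.mem_setOf_eq] at hx1 hx2
    obtain ⟨p, ⟨k, l, hk1, hkl, hlm, hak, hal, hqp⟩, j, hj1, hjn, hxe1⟩ := hx1
    obtain ⟨q', ⟨k', l', hk1', hkl', hlm', hak', hal', hqp'⟩, j', hj1', hjn', hxe2⟩ := hx2
    rw [hxe1] at hxe2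
    simp only [Prod.mk.injEq] at hxe2
    omega
  · rw [Set.disjoint_left]
    rintro x hx1 hx2
    rw [hA₂] at hx1; rw [hB] at hx2
    simp only [invSet, Set.mem_setOf_eq] at hx1 hx2
    obtain ⟨p, ⟨k, l, hk1, hkl, hlm, hak, hal, hqp⟩, j, hj1, hjn, hxe1⟩ := hx1
    obtain ⟨p', q', ⟨k', l', hk1', hkl', hln', hak', hal', hqp'⟩, hxe2⟩ := hx2
    have hp' : 1 ≤ p' ∧ p' ≤ n := hak' ▸ hb.1 k' hk1' (by omega)
    rw [hxe1] at hxe2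
    simp only [Prod.mk.injEq] at hxe2
    omega
  · rw [Set.disjoint_left]
    rintro x hx1 hx2
    rw [hA₃] at hx1; rw [hB] at hx2
    simp only [invSet, Set.mem_setOf_eq] at hx1 hx2
    obtain ⟨q, ⟨k, l, hk1, hkl, hlm, hak, hal, hqp⟩, j, hj1, hjn, hxe1⟩ := hx1
    obtain ⟨p', q', ⟨k', l', hk1', hkl', hln', hak', hal', hqp'⟩, hxe2⟩ := hx2
    have hq' : 1 ≤ q' ∧ q' ≤ n := hal' ▸ hb.1 l' (by omega) hln'
    rw [hxe1] at hxe2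
    simp only [Prod.mk.injEq] at hxe2
    omega
end

section
/- In the operad of permutations Perm with the weak Bruhat order (ordered by containment of inversion sets), for fixed a ∈ S_m and 1 ≤ i ≤ m, if b ≤ c in S_n then a ∘_i b ≤ a ∘_i c in S_{m+n-1}. -/
lemma oneline_surj {n : ℕ} {c : ℕ → ℕ} (hc : OneLine n c) :
    ∀ v, 1 ≤ v → v ≤ n → ∃ j, 1 ≤ j ∧ j ≤ n ∧ c j = v := by
  intro v hv1 hvn
  have := Finset.surj_on_of_inj_on_of_card_le (s := Finset.Icc 1 n) (t := Finset.Icc 1 n)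
    (f := fun j _ => c j)
    (fun j hj => by
      simp only [Finset.mem_Icc] at hj ⊢
      exact hc.1 j hj.1 hj.2)
    (fun j₁ j₂ h1 h2 h => by
      simp only [Finset.mem_Icc] at h1 h2
      exact hc.2 j₁ j₂ h1.1 h1.2 h2.1 h2.2 h)
    le_rfl v (by simp only [Finset.mem_Icc]; omega)
  obtain ⟨j, hj, hj'⟩ := this
  simp only [Finset.mem_Icc] at hj
  exact ⟨j, hj.1, hj.2, hj'.symm⟩

lemma pcomp_outside (n i : ℕ) (a b c : ℕ → ℕ) (k : ℕ) (h : k < i ∨ i + n - 1 < k) :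
    pcomp n i a b k = pcomp n i a c k := by
  unfold pcomp
  rcases h with h | h
  · simp [h]
  · simp only [if_neg (show ¬ k < i by omega), if_neg (show ¬ k ≤ i + n - 1 by omega)]

/-- the substitution composition of permutations is monotone in
the second argument for the weak Bruhat order (containment of inversion sets). -/
theorem stmt13 (m n i : ℕ) (a b c : ℕ → ℕ)
    (ha : OneLine m a) (hb : OneLine n b) (hc : OneLine n c)
    (hi1 : 1 ≤ i) (him : i ≤ m)
    (hbc : invSet n b ⊆ invSet n c) :
    invSet (m + n - 1) (pcomp n i a b) ⊆ invSet (m + n - 1) (pcomp n i a c) := by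
  rintro ⟨p, q⟩ ⟨k, l, hk1, hkl, hlm, hkp, hlq, hqp⟩
  dsimp only [invSet, Set.mem_setOf_eq] at hkp hlq hqp ⊢
  have hai := ha.1 i hi1 him
  by_cases hkb : i ≤ k ∧ k ≤ i + n - 1
  · by_cases hlb : i ≤ l ∧ l ≤ i + n - 1
    · -- both in the block
      have hn1 : 1 ≤ n := by omega
      have hpv : p = b (k - i + 1) + a i - 1 := by
        rw [← hkp]; unfold pcomp
        rw [if_neg (by omega), if_pos (by omega)]
      have hqv : q = b (l - i + 1) + a i - 1 := by
        rw [← hlq]; unfold pcomp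
        rw [if_neg (by omega), if_pos (by omega)]
      have hb1 := hb.1 (k - i + 1) (by omega) (by omega)
      have hb2 := hb.1 (l - i + 1) (by omega) (by omega)
      have hbinv : (b (k - i + 1), b (l - i + 1)) ∈ invSet n b :=
        ⟨k - i + 1, l - i + 1, by omega, by omega, by omega, rfl, rfl, by omega⟩
      obtain ⟨k', l', hk'1, hk'l', hl'n, hck', hcl', _⟩ := hbc hbinv
      refine ⟨i + k' - 1, i + l' - 1, by omega, by omega, by omega, ?_, ?_, hqp⟩
      · unfold pcomp
        rw [if_neg (by omega), if_pos (by omega)]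
        have h1 : i + k' - 1 - i + 1 = k' := by omega
        rw [h1, hck']; omega
      · unfold pcomp
        rw [if_neg (by omega), if_pos (by omega)]
        have h1 : i + l' - 1 - i + 1 = l' := by omega
        rw [h1, hcl']; omega
    · -- k in block, l outside (to the right)
      have hn1 : 1 ≤ n := by omega
      have hlout : i + n - 1 < l := by omega
      have hpv : p = b (k - i + 1) + a i - 1 := by
        rw [← hkp]; unfold pcomp
        rw [if_neg (by omega), if_pos (by omega)]
      have hb1 := hb.1 (k - i + 1) (by omega) (by omega)
      obtain ⟨j', hj'1, hj'n, hcj'⟩ := oneline_surj hc (b (k - i + 1)) hb1.1 hb1.2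
      refine ⟨i + j' - 1, l, by omega, by omega, hlm, ?_, ?_, hqp⟩
      · unfold pcomp
        rw [if_neg (by omega), if_pos (by omega)]
        have h1 : i + j' - 1 - i + 1 = j' := by omega
        rw [h1, hcj']; omega
      · rw [← pcomp_outside n i a b c l (Or.inr hlout)]; exact hlq
  · by_cases hlb : i ≤ l ∧ l ≤ i + n - 1
    · -- k outside (to the left), l in block
      have hkout : k < i := by omega
      have hn1 : 1 ≤ n := by omega
      have hqv : q = b (l - i + 1) + a i - 1 := by
        rw [← hlq]; unfold pcomp
        rw [if_neg (by omega), if_pos (by omega)]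
      have hb2 := hb.1 (l - i + 1) (by omega) (by omega)
      obtain ⟨j', hj'1, hj'n, hcj'⟩ := oneline_surj hc (b (l - i + 1)) hb2.1 hb2.2
      refine ⟨k, i + j' - 1, hk1, by omega, by omega, ?_, ?_, hqp⟩
      · rw [← pcomp_outside n i a b c k (Or.inl hkout)]; exact hkp
      · unfold pcomp
        rw [if_neg (by omega), if_pos (by omega)]
        have h1 : i + j' - 1 - i + 1 = j' := by omega
        rw [h1, hcj']; omega
    · -- both outside
      refine ⟨k, l, hk1, hkl, hlm, ?_, ?_, hqp⟩
      · rw [← pcomp_outside n i a b c k (by omega)]; exact hkp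
      · rw [← pcomp_outside n i a b c l (by omega)]; exact hlq
end

section
/- For any a ∈ S_m and 1 ≤ i ≤ m, the map b ↦ a ∘_i b from S_n to S_{m+n-1} is an injective lattice homomorphism with respect to the weak Bruhat order lattice structures: a ∘_i (b ∨ c) = (a ∘_i b) ∨ (a ∘_i c) and a ∘_i (b ∧ c) = (a ∘_i b) ∧ (a ∘_i c). -/
section Helpers

/-- An injective self-map of `{1,…,n}` is surjective. -/
lemma oneLine_surj {n : ℕ} {x : ℕ → ℕ} (hx : OneLine n x) :
    ∀ v, 1 ≤ v → v ≤ n → ∃ k, 1 ≤ k ∧ k ≤ n ∧ x k = v := by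
  intro v hv1 hv2
  have hinj : Set.InjOn x (Finset.Icc 1 n) := by
    intro s hs t ht h
    simp only [Finset.coe_Icc, Set.mem_Icc] at hs ht
    exact hx.2 s t hs.1 hs.2 ht.1 ht.2 h
  have himg : (Finset.Icc 1 n).image x = Finset.Icc 1 n := by
    apply Finset.eq_of_subset_of_card_le
    · intro u hu
      simp only [Finset.mem_image, Finset.mem_Icc] at hu ⊢
      obtain ⟨t, ht, rfl⟩ := hu
      exact hx.1 t ht.1 ht.2
    · rw [Finset.card_image_of_injOn hinj]
  have hv : v ∈ (Finset.Icc 1 n).image x := by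
    rw [himg]; simp only [Finset.mem_Icc]; omega
  simp only [Finset.mem_image, Finset.mem_Icc] at hv
  obtain ⟨t, ht, rfl⟩ := hv
  exact ⟨t, ht.1, ht.2, rfl⟩

lemma pcomp_middle {n i d : ℕ} {a x : ℕ → ℕ} (hd : a i = d + 1) (hi1 : 1 ≤ i)
    {k : ℕ} (h1 : i ≤ k) (h2 : k ≤ i + n - 1) :
    pcomp n i a x k = x (k - i + 1) + d := by
  unfold pcomp
  rw [if_neg (by omega), if_pos h2]
  omega

lemma pcomp_outer_eq {n i : ℕ} {a x y : ℕ → ℕ} (hi1 : 1 ≤ i) {k : ℕ}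
    (h : k < i ∨ i + n - 1 < k) :
    pcomp n i a x k = pcomp n i a y k := by
  unfold pcomp
  rcases h with h | h
  · rw [if_pos h, if_pos h]
  · have h1 : ¬ k < i := by omega
    have h2 : ¬ k ≤ i + n - 1 := by omega
    rw [if_neg h1, if_neg h2, if_neg h1, if_neg h2]

lemma pcomp_outer_notblock {m n i d : ℕ} {a x : ℕ → ℕ}
    (ha : OneLine m a) (hi1 : 1 ≤ i) (him : i ≤ m) (hd : a i = d + 1) {k : ℕ}
    (hk1 : 1 ≤ k) (hkM : k ≤ m + n - 1) (h : k < i ∨ i + n - 1 < k) :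
    pcomp n i a x k < d + 1 ∨ d + n < pcomp n i a x k := by
  rcases h with h | h
  · have hkm : k ≤ m := by omega
    have hb := ha.1 k hk1 hkm
    have hne : a k ≠ a i := fun he => by
      have := ha.2 k i hk1 hkm hi1 him he; omega
    unfold pcomp
    rw [if_pos h]
    by_cases hc : a i < a k
    · rw [if_pos hc]; omega
    · rw [if_neg hc]; omega
  · have h1 : 1 ≤ k - n + 1 := by omega
    have h2 : k - n + 1 ≤ m := by omega
    have hb := ha.1 _ h1 h2
    have hne : a (k - n + 1) ≠ a i := fun he => by
      have := ha.2 _ i h1 h2 hi1 him he; omega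
    have hc1 : ¬ k < i := by omega
    have hc2 : ¬ k ≤ i + n - 1 := by omega
    unfold pcomp
    rw [if_neg hc1, if_neg hc2]
    by_cases hc : a i < a (k - n + 1)
    · rw [if_pos hc]; omega
    · rw [if_neg hc]; omega

/-- Inversions of `x` give block inversions of `a ∘ᵢ x`. -/
lemma pcomp_inv_block {m n i d : ℕ} {a x : ℕ → ℕ}
    (hi1 : 1 ≤ i) (him : i ≤ m) (hd : a i = d + 1) {p q : ℕ}
    (h : (p, q) ∈ invSet n x) :
    (p + d, q + d) ∈ invSet (m + n - 1) (pcomp n i a x) := by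
  obtain ⟨k, l, hk1, hkl, hln, hkp, hlq, hqp⟩ := h
  have hkp' : x k = p := hkp
  have hlq' : x l = q := hlq
  have hqp' : q < p := hqp
  refine ⟨k + i - 1, l + i - 1, by omega, by omega, by omega, ?_, ?_, by exact (by omega : q + d < p + d)⟩
  · show pcomp n i a x (k + i - 1) = p + d
    rw [pcomp_middle hd hi1 (by omega) (by omega)]
    have he : k + i - 1 - i + 1 = k := by omega
    rw [he, hkp']
  · show pcomp n i a x (l + i - 1) = q + d
    rw [pcomp_middle hd hi1 (by omega) (by omega)]
    have he : l + i - 1 - i + 1 = l := by omega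
    rw [he, hlq']

/-- Classification of inversions of `a ∘ᵢ x`: each is either a block inversion
coming from `x`, or is independent of `x` (and not entirely inside the block). -/
lemma pcomp_inv_classify {m n i d : ℕ} {a x : ℕ → ℕ}
    (ha : OneLine m a) (hx : OneLine n x) (hi1 : 1 ≤ i) (him : i ≤ m)
    (hd : a i = d + 1) {P Q : ℕ}
    (h : (P, Q) ∈ invSet (m + n - 1) (pcomp n i a x)) :
    (∃ p q, 1 ≤ q ∧ q < p ∧ p ≤ n ∧ P = p + d ∧ Q = q + d ∧ (p, q) ∈ invSet n x) ∨
    ((P < d + 1 ∨ d + n < P ∨ Q < d + 1 ∨ d + n < Q) ∧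
      ∀ y : ℕ → ℕ, OneLine n y → (P, Q) ∈ invSet (m + n - 1) (pcomp n i a y)) := by
  obtain ⟨k, l, hk1, hkl, hlM, hkP, hlQ, hQP⟩ := h
  have hkP' : pcomp n i a x k = P := hkP
  have hlQ' : pcomp n i a x l = Q := hlQ
  have hQP' : Q < P := hQP
  have hk3 : k < i ∨ (i ≤ k ∧ k ≤ i + n - 1) ∨ i + n - 1 < k := by omega
  have hl3 : l < i ∨ (i ≤ l ∧ l ≤ i + n - 1) ∨ i + n - 1 < l := by omega
  rcases hk3 with hkL | hkM' | hkR
  · -- k on the left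
    rcases hl3 with hlL | hlM' | hlR
    · -- (L, L)
      right
      constructor
      · have hnb := pcomp_outer_notblock (n := n) (x := x) ha hi1 him hd hk1 (by omega) (Or.inl hkL)
        rw [hkP'] at hnb; omega
      · intro y hy
        exact ⟨k, l, hk1, hkl, hlM,
          (pcomp_outer_eq hi1 (Or.inl hkL)).trans hkP',
          (pcomp_outer_eq hi1 (Or.inl hlL)).trans hlQ', hQP⟩
    · -- (L, M)
      right
      have hQv : Q = x (l - i + 1) + d := by
        rw [← hlQ', pcomp_middle hd hi1 hlM'.1 hlM'.2]
      have hxb := hx.1 (l - i + 1) (by omega) (by omega)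
      constructor
      · have hnb := pcomp_outer_notblock (n := n) (x := x) ha hi1 him hd hk1 (by omega) (Or.inl hkL)
        rw [hkP'] at hnb; omega
      · intro y hy
        obtain ⟨l0, hl01, hl0n, hl0v⟩ := oneLine_surj hy (x (l - i + 1)) hxb.1 hxb.2
        refine ⟨k, l0 + i - 1, hk1, by omega, by omega, ?_, ?_, hQP⟩
        · exact (pcomp_outer_eq hi1 (Or.inl hkL)).trans hkP'
        · show pcomp n i a y (l0 + i - 1) = Q
          rw [pcomp_middle hd hi1 (by omega) (by omega)]
          have he : l0 + i - 1 - i + 1 = l0 := by omega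
          rw [he, hl0v]; omega
    · -- (L, R)
      right
      constructor
      · have hnb := pcomp_outer_notblock (n := n) (x := x) ha hi1 him hd hk1 (by omega) (Or.inl hkL)
        rw [hkP'] at hnb; omega
      · intro y hy
        exact ⟨k, l, hk1, hkl, hlM,
          (pcomp_outer_eq hi1 (Or.inl hkL)).trans hkP',
          (pcomp_outer_eq hi1 (Or.inr hlR)).trans hlQ', hQP⟩
  · -- k in the middle
    rcases hl3 with hlL | hlM' | hlR
    · exact (by omega : False).elim
    · -- (M, M)
      left
      have hPv : P = x (k - i + 1) + d := by
        rw [← hkP', pcomp_middle hd hi1 hkM'.1 hkM'.2]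
      have hQv : Q = x (l - i + 1) + d := by
        rw [← hlQ', pcomp_middle hd hi1 hlM'.1 hlM'.2]
      have hxbk := hx.1 (k - i + 1) (by omega) (by omega)
      have hxbl := hx.1 (l - i + 1) (by omega) (by omega)
      refine ⟨x (k - i + 1), x (l - i + 1), by omega, by omega, by omega, hPv, hQv,
        ⟨k - i + 1, l - i + 1, by omega, by omega, by omega, rfl, rfl,
          (by omega : x (l - i + 1) < x (k - i + 1))⟩⟩
    · -- (M, R)
      right
      have hPv : P = x (k - i + 1) + d := by
        rw [← hkP', pcomp_middle hd hi1 hkM'.1 hkM'.2]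
      have hxb := hx.1 (k - i + 1) (by omega) (by omega)
      constructor
      · have hnb := pcomp_outer_notblock (n := n) (x := x) ha hi1 him hd (by omega) hlM (Or.inr hlR)
        rw [hlQ'] at hnb; omega
      · intro y hy
        obtain ⟨k0, hk01, hk0n, hk0v⟩ := oneLine_surj hy (x (k - i + 1)) hxb.1 hxb.2
        refine ⟨k0 + i - 1, l, by omega, by omega, hlM, ?_, ?_, hQP⟩
        · show pcomp n i a y (k0 + i - 1) = P
          rw [pcomp_middle hd hi1 (by omega) (by omega)]
          have he : k0 + i - 1 - i + 1 = k0 := by omega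
          rw [he, hk0v]; omega
        · exact (pcomp_outer_eq hi1 (Or.inr hlR)).trans hlQ'
  · -- k on the right
    rcases hl3 with hlL | hlM' | hlR
    · exact (by omega : False).elim
    · exact (by omega : False).elim
    · -- (R, R)
      right
      constructor
      · have hnb := pcomp_outer_notblock (n := n) (x := x) ha hi1 him hd hk1 (by omega) (Or.inr hkR)
        rw [hkP'] at hnb; omega
      · intro y hy
        exact ⟨k, l, hk1, hkl, hlM,
          (pcomp_outer_eq hi1 (Or.inr hkR)).trans hkP',
          (pcomp_outer_eq hi1 (Or.inr hlR)).trans hlQ', hQP⟩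

/-- The sorted list of positions of `w` carrying the block values `d+1,…,d+n`. -/
def blockList (M d n : ℕ) (w : ℕ → ℕ) : List ℕ :=
  ((Finset.Icc 1 M).filter (fun t => d + 1 ≤ w t ∧ w t ≤ d + n)).sort (· ≤ ·)

/-- The pattern of `w` on the block values `d+1,…,d+n`, as a permutation of `{1,…,n}`. -/
def patt (M d n : ℕ) (w : ℕ → ℕ) : ℕ → ℕ :=
  fun k => w ((blockList M d n w).getD (k - 1) 0) - d

lemma blockList_mem {M d n : ℕ} {w : ℕ → ℕ} {t : ℕ} :
    t ∈ blockList M d n w ↔ (1 ≤ t ∧ t ≤ M ∧ d + 1 ≤ w t ∧ w t ≤ d + n) := by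
  unfold blockList
  rw [Finset.mem_sort, Finset.mem_filter, Finset.mem_Icc]
  tauto

lemma blockList_length {M d n : ℕ} {w : ℕ → ℕ} (hw : OneLine M w) (hdn : d + n ≤ M) :
    (blockList M d n w).length = n := by
  unfold blockList
  rw [Finset.length_sort]
  have hinj : Set.InjOn w (Finset.Icc 1 M) := by
    intro s hs t ht h
    simp only [Finset.coe_Icc, Set.mem_Icc] at hs ht
    exact hw.2 s t hs.1 hs.2 ht.1 ht.2 h
  have himg : (Finset.Icc 1 M).image w = Finset.Icc 1 M := by
    apply Finset.eq_of_subset_of_card_le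
    · intro u hu
      simp only [Finset.mem_image, Finset.mem_Icc] at hu ⊢
      obtain ⟨t, ht, rfl⟩ := hu
      exact hw.1 t ht.1 ht.2
    · rw [Finset.card_image_of_injOn hinj]
  have himg2 : ((Finset.Icc 1 M).filter (fun t => d + 1 ≤ w t ∧ w t ≤ d + n)).image w
      = Finset.Icc (d + 1) (d + n) := by
    apply Finset.Subset.antisymm
    · intro v hv
      simp only [Finset.mem_image, Finset.mem_filter, Finset.mem_Icc] at hv ⊢
      obtain ⟨t, ⟨_, ht⟩, rfl⟩ := hv
      exact ht
    · intro v hv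
      simp only [Finset.mem_Icc] at hv
      have hvs : v ∈ (Finset.Icc 1 M).image w := by
        rw [himg]; simp only [Finset.mem_Icc]; omega
      simp only [Finset.mem_image, Finset.mem_Icc] at hvs
      obtain ⟨t, ht, rfl⟩ := hvs
      simp only [Finset.mem_image, Finset.mem_filter, Finset.mem_Icc]
      exact ⟨t, ⟨ht, hv⟩, rfl⟩
  have hcard := Finset.card_image_of_injOn
    (s := (Finset.Icc 1 M).filter (fun t => d + 1 ≤ w t ∧ w t ≤ d + n))
    (hinj.mono (Finset.coe_subset.2 (Finset.filter_subset _ _)))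
  rw [himg2] at hcard
  rw [← hcard, Nat.card_Icc]
  omega

lemma blockList_sorted {M d n : ℕ} (w : ℕ → ℕ) :
    (blockList M d n w).Pairwise (· < ·) :=
  (Finset.sortedLT_sort _).pairwise

lemma patt_oneline {M d n : ℕ} {w : ℕ → ℕ} (hw : OneLine M w) (hdn : d + n ≤ M) :
    OneLine n (patt M d n w) := by
  have hlen := blockList_length hw hdn
  have hmem : ∀ k : ℕ, 1 ≤ k → k ≤ n →
      (blockList M d n w).getD (k - 1) 0 ∈ blockList M d n w := by
    intro k h1 h2
    have hlt : k - 1 < (blockList M d n w).length := by omega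
    rw [List.getD_eq_get _ _ ⟨_, hlt⟩]
    exact List.get_mem _ _
  constructor
  · intro k h1 h2
    have ht := blockList_mem.1 (hmem k h1 h2)
    unfold patt
    omega
  · intro k l h1 h2 h3 h4 he
    have htk := blockList_mem.1 (hmem k h1 h2)
    have htl := blockList_mem.1 (hmem l h3 h4)
    unfold patt at he
    have hwe : w ((blockList M d n w).getD (k - 1) 0)
        = w ((blockList M d n w).getD (l - 1) 0) := by omega
    have hte := hw.2 _ _ htk.1 htk.2.1 htl.1 htl.2.1 hwe
    have hltk : k - 1 < (blockList M d n w).length := by omega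
    have hltl : l - 1 < (blockList M d n w).length := by omega
    rw [List.getD_eq_get _ _ ⟨_, hltk⟩, List.getD_eq_get _ _ ⟨_, hltl⟩] at hte
    have hnd := List.nodup_iff_injective_get.1
      (Finset.sort_nodup ((Finset.Icc 1 M).filter (fun t => d + 1 ≤ w t ∧ w t ≤ d + n)) (· ≤ ·))
    have := hnd hte
    have : k - 1 = l - 1 := congrArg Fin.val this
    omega

/-- Inversions of `w` within the block give inversions of the pattern. -/
lemma patt_mem_inv {M d n : ℕ} {w : ℕ → ℕ} (hw : OneLine M w) (hdn : d + n ≤ M)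
    {p q s t : ℕ} (hs1 : 1 ≤ s) (hst : s < t) (htM : t ≤ M)
    (hws : w s = p + d) (hwt : w t = q + d) (hq1 : 1 ≤ q) (hqp : q < p) (hpn : p ≤ n) :
    (p, q) ∈ invSet n (patt M d n w) := by
  have hlen := blockList_length hw hdn
  have hsmem : s ∈ blockList M d n w := blockList_mem.2 ⟨hs1, by omega, by omega, by omega⟩
  have htmem : t ∈ blockList M d n w := blockList_mem.2 ⟨by omega, htM, by omega, by omega⟩
  obtain ⟨is, hsget⟩ := List.mem_iff_get.1 hsmem
  obtain ⟨it, htget⟩ := List.mem_iff_get.1 htmem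
  have hpair : ∀ u v : Fin (blockList M d n w).length, u < v →
      (blockList M d n w).get u < (blockList M d n w).get v := by
    intro u v huv
    exact (blockList_sorted (M := M) (d := d) (n := n) w).rel_get_of_lt huv
  have hidx : (is : ℕ) < (it : ℕ) := by
    rcases lt_trichotomy (is : ℕ) (it : ℕ) with h | h | h
    · exact h
    · exfalso; have : is = it := Fin.ext h
      rw [this, htget] at hsget; omega
    · exfalso; have := hpair it is (by exact h)
      rw [hsget, htget] at this; omega
  refine ⟨(is : ℕ) + 1, (it : ℕ) + 1, by omega, by omega, by omega, ?_, ?_, hqp⟩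
  · show patt M d n w ((is : ℕ) + 1) = p
    unfold patt
    have hlt : (is : ℕ) + 1 - 1 < (blockList M d n w).length := by omega
    have he : (is : ℕ) + 1 - 1 = (is : ℕ) := by omega
    rw [he, List.getD_eq_get _ _ ⟨(is : ℕ), by omega⟩]
    have : (blockList M d n w).get ⟨(is : ℕ), by omega⟩ = s := by
      rw [← hsget]
    rw [this, hws]; omega
  · show patt M d n w ((it : ℕ) + 1) = q
    unfold patt
    have he : (it : ℕ) + 1 - 1 = (it : ℕ) := by omega
    rw [he, List.getD_eq_get _ _ ⟨(it : ℕ), by omega⟩]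
    have : (blockList M d n w).get ⟨(it : ℕ), by omega⟩ = t := by
      rw [← htget]
    rw [this, hwt]; omega

/-- Inversions of the pattern give inversions of `w`. -/
lemma inv_patt {M d n : ℕ} {w : ℕ → ℕ} (hw : OneLine M w) (hdn : d + n ≤ M)
    {p q : ℕ} (h : (p, q) ∈ invSet n (patt M d n w)) :
    (p + d, q + d) ∈ invSet M w := by
  have hlen := blockList_length hw hdn
  obtain ⟨k, l, hk1, hkl, hln, hkp, hlq, hqp⟩ := h
  have hkp' : patt M d n w k = p := hkp
  have hlq' : patt M d n w l = q := hlq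
  have hqp' : q < p := hqp
  have hltk : k - 1 < (blockList M d n w).length := by omega
  have hltl : l - 1 < (blockList M d n w).length := by omega
  set tk := (blockList M d n w).getD (k - 1) 0 with htk
  set tl := (blockList M d n w).getD (l - 1) 0 with htl
  have hmk : tk ∈ blockList M d n w := by
    rw [htk, List.getD_eq_get _ _ ⟨_, hltk⟩]; exact List.get_mem _ _
  have hml : tl ∈ blockList M d n w := by
    rw [htl, List.getD_eq_get _ _ ⟨_, hltl⟩]; exact List.get_mem _ _
  have hbk := blockList_mem.1 hmk
  have hbl := blockList_mem.1 hml
  have hwk : w tk = p + d := by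
    have : w tk - d = p := hkp'
    omega
  have hwl : w tl = q + d := by
    have : w tl - d = q := hlq'
    omega
  have hto : tk < tl := by
    have hpair := (blockList_sorted (M := M) (d := d) (n := n) w).rel_get_of_lt
      (a := ⟨k - 1, hltk⟩) (b := ⟨l - 1, hltl⟩) (by simp [Fin.lt_def]; omega)
    rw [htk, htl, List.getD_eq_get _ _ ⟨_, hltk⟩, List.getD_eq_get _ _ ⟨_, hltl⟩]
    exact hpair
  exact ⟨tk, tl, hbk.1, hto, hbl.2.1, hwk, hwl, by exact (by omega : q + d < p + d)⟩

end Helpers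

/-- for fixed `a ∈ S_m` and `1 ≤ i ≤ m`, the map `b ↦ a ∘ᵢ b`
from `S_n` to `S_{m+n-1}` is an injective lattice homomorphism for the weak
Bruhat order: it preserves joins (least upper bounds for containment of
inversion sets) and meets (greatest lower bounds). -/
theorem stmt14 (m n i : ℕ) (a : ℕ → ℕ)
    (ha : OneLine m a) (hi1 : 1 ≤ i) (him : i ≤ m) :
    -- injectivity
    (∀ b c : ℕ → ℕ, OneLine n b → OneLine n c →
      (∀ k : ℕ, 1 ≤ k → k ≤ m + n - 1 → pcomp n i a b k = pcomp n i a c k) →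
      ∀ k : ℕ, 1 ≤ k → k ≤ n → b k = c k) ∧
    -- preservation of joins
    (∀ b c j : ℕ → ℕ, OneLine n b → OneLine n c → OneLine n j →
      invSet n b ⊆ invSet n j → invSet n c ⊆ invSet n j →
      (∀ z : ℕ → ℕ, OneLine n z → invSet n b ⊆ invSet n z →
        invSet n c ⊆ invSet n z → invSet n j ⊆ invSet n z) →
      (invSet (m + n - 1) (pcomp n i a b) ⊆ invSet (m + n - 1) (pcomp n i a j) ∧
       invSet (m + n - 1) (pcomp n i a c) ⊆ invSet (m + n - 1) (pcomp n i a j) ∧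
       ∀ w : ℕ → ℕ, OneLine (m + n - 1) w →
         invSet (m + n - 1) (pcomp n i a b) ⊆ invSet (m + n - 1) w →
         invSet (m + n - 1) (pcomp n i a c) ⊆ invSet (m + n - 1) w →
         invSet (m + n - 1) (pcomp n i a j) ⊆ invSet (m + n - 1) w)) ∧
    -- preservation of meets
    (∀ b c j : ℕ → ℕ, OneLine n b → OneLine n c → OneLine n j →
      invSet n j ⊆ invSet n b → invSet n j ⊆ invSet n c →
      (∀ z : ℕ → ℕ, OneLine n z → invSet n z ⊆ invSet n b →
        invSet n z ⊆ invSet n c → invSet n z ⊆ invSet n j) →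
      (invSet (m + n - 1) (pcomp n i a j) ⊆ invSet (m + n - 1) (pcomp n i a b) ∧
       invSet (m + n - 1) (pcomp n i a j) ⊆ invSet (m + n - 1) (pcomp n i a c) ∧
       ∀ w : ℕ → ℕ, OneLine (m + n - 1) w →
         invSet (m + n - 1) w ⊆ invSet (m + n - 1) (pcomp n i a b) →
         invSet (m + n - 1) w ⊆ invSet (m + n - 1) (pcomp n i a c) →
         invSet (m + n - 1) w ⊆ invSet (m + n - 1) (pcomp n i a j))) := by
  have hai := ha.1 i hi1 him
  obtain ⟨d, hd⟩ : ∃ d, a i = d + 1 := ⟨a i - 1, by omega⟩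
  have hdn : d + n ≤ m + n - 1 := by omega
  refine ⟨?_, ?_, ?_⟩
  · -- injectivity
    intro b c hb hc h k hk1 hkn
    have hh := h (k + i - 1) (by omega) (by omega)
    rw [pcomp_middle hd hi1 (by omega) (by omega),
        pcomp_middle hd hi1 (by omega) (by omega)] at hh
    have he : k + i - 1 - i + 1 = k := by omega
    rw [he] at hh
    omega
  · -- joins
    intro b c j hb hc hj hbj hcj hjoin
    refine ⟨?_, ?_, ?_⟩
    · intro pq hpq
      obtain ⟨P, Q⟩ := pq
      rcases pcomp_inv_classify ha hb hi1 him hd hpq with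
        ⟨p, q, hq1, hqp, hpn, rfl, rfl, hmem⟩ | ⟨_, hall⟩
      · exact pcomp_inv_block hi1 him hd (hbj hmem)
      · exact hall j hj
    · intro pq hpq
      obtain ⟨P, Q⟩ := pq
      rcases pcomp_inv_classify ha hc hi1 him hd hpq with
        ⟨p, q, hq1, hqp, hpn, rfl, rfl, hmem⟩ | ⟨_, hall⟩
      · exact pcomp_inv_block hi1 him hd (hcj hmem)
      · exact hall j hj
    · intro w hw hbw hcw pq hpq
      obtain ⟨P, Q⟩ := pq
      have hz := patt_oneline hw hdn
      have hsub : ∀ x : ℕ → ℕ, OneLine n x →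
          invSet (m + n - 1) (pcomp n i a x) ⊆ invSet (m + n - 1) w →
          invSet n x ⊆ invSet n (patt (m + n - 1) d n w) := by
        intro x hx hxw pq' hpq'
        obtain ⟨p, q⟩ := pq'
        obtain ⟨k0, l0, hk01, hkl0, hl0n, hk0p, hl0q, hqp0⟩ := hpq'
        have hk0p' : x k0 = p := hk0p
        have hl0q' : x l0 = q := hl0q
        have hqp0' : q < p := hqp0
        have hpb := hx.1 k0 hk01 (by omega)
        have hqb := hx.1 l0 (by omega) hl0n
        have h2 := hxw (pcomp_inv_block hi1 him hd
          ⟨k0, l0, hk01, hkl0, hl0n, hk0p, hl0q, hqp0⟩)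
        obtain ⟨s, t, hs1, hst, htM, hws, hwt, _⟩ := h2
        exact patt_mem_inv hw hdn hs1 hst htM hws hwt (by omega) hqp0' (by omega)
      have hjz := hjoin _ hz (hsub b hb hbw) (hsub c hc hcw)
      rcases pcomp_inv_classify ha hj hi1 him hd hpq with
        ⟨p, q, hq1, hqp, hpn, rfl, rfl, hmem⟩ | ⟨_, hall⟩
      · exact inv_patt hw hdn (hjz hmem)
      · exact hbw (hall b hb)
  · -- meets
    intro b c j hb hc hj hjb hjc hmeet
    refine ⟨?_, ?_, ?_⟩
    · intro pq hpq
      obtain ⟨P, Q⟩ := pq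
      rcases pcomp_inv_classify ha hj hi1 him hd hpq with
        ⟨p, q, hq1, hqp, hpn, rfl, rfl, hmem⟩ | ⟨_, hall⟩
      · exact pcomp_inv_block hi1 him hd (hjb hmem)
      · exact hall b hb
    · intro pq hpq
      obtain ⟨P, Q⟩ := pq
      rcases pcomp_inv_classify ha hj hi1 him hd hpq with
        ⟨p, q, hq1, hqp, hpn, rfl, rfl, hmem⟩ | ⟨_, hall⟩
      · exact pcomp_inv_block hi1 him hd (hjc hmem)
      · exact hall c hc
    · intro w hw hwb hwc pq hpq
      obtain ⟨P, Q⟩ := pq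
      have hz := patt_oneline hw hdn
      have hsub : ∀ x : ℕ → ℕ, OneLine n x →
          invSet (m + n - 1) w ⊆ invSet (m + n - 1) (pcomp n i a x) →
          invSet n (patt (m + n - 1) d n w) ⊆ invSet n x := by
        intro x hx hwx pq' hpq'
        obtain ⟨p, q⟩ := pq'
        obtain ⟨k0, l0, hk01, hkl0, hl0n, hk0p, hl0q, hqp0⟩ := hpq'
        have hpb := hz.1 k0 hk01 (by omega)
        have hqb := hz.1 l0 (by omega) hl0n
        have hk0p' : patt (m + n - 1) d n w k0 = p := hk0p
        have hl0q' : patt (m + n - 1) d n w l0 = q := hl0q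
        have h2 := hwx (inv_patt hw hdn ⟨k0, l0, hk01, hkl0, hl0n, hk0p, hl0q, hqp0⟩)
        rcases pcomp_inv_classify ha hx hi1 him hd h2 with
          ⟨p', q', hq1', hqp', hpn', he1, he2, hmem⟩ | ⟨hnb, _⟩
        · have hpe : p = p' := by omega
          have hqe : q = q' := by omega
          rw [hpe, hqe]
          exact hmem
        · exact absurd hnb (by omega)
      have hzj := hmeet _ hz (hsub b hb hwb) (hsub c hc hwc)
      rcases pcomp_inv_classify ha hb hi1 him hd (hwb hpq) with
        ⟨p, q, hq1, hqp, hpn, rfl, rfl, _⟩ | ⟨_, hall⟩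
      · obtain ⟨s, t, hs1, hst, htM, hws, hwt, _⟩ := hpq
        have hws' : w s = p + d := hws
        have hwt' : w t = q + d := hwt
        exact pcomp_inv_block hi1 him hd
          (hzj (patt_mem_inv hw hdn hs1 hst htM hws' hwt' hq1 hqp hpn))
      · exact hall j hj
end

section
/- For the reversal involution # on S_n (a_1...a_n ↦ a_n...a_{1}) and the permutation operad composition, one has (a ∘_i d)^# = a^# ∘_{m-i+1} d^# for all a ∈ S_m, d ∈ S_n, 1 ≤ i ≤ m. -/
/-- The reversal involution on one-line notations of permutations of `{1,…,m}`:
`a₁…a_m ↦ a_m…a₁`. -/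
def rev (m : ℕ) (a : ℕ → ℕ) : ℕ → ℕ := fun k => a (m + 1 - k)

/-- the reversal involution satisfies
`(a ∘ᵢ d)^# = a^# ∘_{m-i+1} d^#` in the permutations operad. -/
theorem stmt16 (m n i : ℕ) (a d : ℕ → ℕ)
    (ha : OneLine m a) (hd : OneLine n d) (hi1 : 1 ≤ i) (him : i ≤ m) :
    ∀ k : ℕ, 1 ≤ k → k ≤ m + n - 1 →
      rev (m + n - 1) (pcomp n i a d) k
        = pcomp n (m - i + 1) (rev m a) (rev n d) k := by
  intro k hk1 hk2
  simp only [rev, pcomp]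
  have e0 : m + 1 - (m - i + 1) = i := by omega
  simp only [e0]
  by_cases hA : k < m - i + 1
  · have h1 : ¬ (m + n - 1 + 1 - k < i) := by omega
    have h2 : ¬ (m + n - 1 + 1 - k ≤ i + n - 1) := by omega
    rw [if_neg h1, if_neg h2, if_pos hA]
    have e : m + n - 1 + 1 - k - n + 1 = m + 1 - k := by omega
    rw [e]
  · by_cases hB : k ≤ m - i + 1 + n - 1
    · have h1 : ¬ (m + n - 1 + 1 - k < i) := by omega
      have h2 : m + n - 1 + 1 - k ≤ i + n - 1 := by omega
      rw [if_neg h1, if_pos h2, if_neg hA, if_pos hB]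
      have e : m + n - 1 + 1 - k - i + 1 = n + 1 - (k - (m - i + 1) + 1) := by omega
      rw [e]
    · have h1 : m + n - 1 + 1 - k < i := by omega
      rw [if_pos h1, if_neg hA, if_neg hB]
      have e : m + 1 - (k - n + 1) = m + n - 1 + 1 - k := by omega
      rw [e]
end

section
/- Define on partitions (identified with weakly decreasing tuples) the composition (λ_1,...,λ_{k-1}) ∘_i (μ_1,...,μ_{l-1}) := (λ_1+μ_1,...,λ_{i-1}+μ_1, λ_i+μ_1, λ_i+μ_2,...,λ_i+μ_{l-1}, λ_i,...,λ_{k-1}) for 1 ≤ i ≤ k-1, and (λ_1,...,λ_{k-1}) ∘_k (μ_1,...,μ_{l-1}) := (λ_1+μ_1,...,λ_{k-1}+μ_1, μ_1,...,μ_{l-1}). Then the result is again a weakly decreasing tuple (an integer partition of length k + l - 2), and this composition arises via the bijection λ_j = d_j + d_{j+1} + ... + d_{k-1} from the gap-insertion compositions on tuples (d_1,...,d_{k-1}) ∈ N_0^{k-1} with d_{k-1} > 0. -/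
/-- The bijection from tuples `(d₁,…,d_r)` to partitions:
`λ_j = d_j + d_{j+1} + … + d_r`. -/
def toPart (r : ℕ) (d : ℕ → ℕ) : ℕ → ℕ := fun j => ∑ t ∈ Finset.Icc j r, d t

/-- The gap-insertion composition of the `M`-associative operad on tuples:
insert the tuple `e` (of length `l-1`) into the `i`-th gap of `d`
(of length `k-1`). -/
def dcomp (l i : ℕ) (d e : ℕ → ℕ) : ℕ → ℕ := fun j =>
  if j < i then d j
  else if j ≤ i + l - 2 then e (j - i + 1)
  else d (j - l + 1)

/-- The composition of integer partitions:
`(λ₁,…,λ_{k-1}) ∘ᵢ (μ₁,…,μ_{l-1}) =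
 (λ₁+μ₁,…,λ_{i-1}+μ₁, λᵢ+μ₁,…,λᵢ+μ_{l-1}, λᵢ,…,λ_{k-1})` for `1 ≤ i ≤ k-1`,
and `(λ₁+μ₁,…,λ_{k-1}+μ₁, μ₁,…,μ_{l-1})` for `i = k`. -/
def partcomp (k l i : ℕ) (a b : ℕ → ℕ) : ℕ → ℕ := fun j =>
  if i ≤ k - 1 then
    (if j < i then a j + b 1
     else if j ≤ i + l - 2 then a i + b (j - i + 1)
     else a (j - l + 1))
  else
    (if j < k then a j + b 1 else b (j - k + 1))

lemma sum_Icc_shift' (g : ℕ → ℕ) (a b c a' b' : ℕ) (hc : c ≤ a) (hab : a ≤ b)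
    (ha' : a' = a - c) (hb' : b' = b - c) :
    ∑ t ∈ Finset.Icc a b, g (t - c) = ∑ t ∈ Finset.Icc a' b', g t := by
  subst ha' hb'
  refine Finset.sum_nbij' (fun t => t - c) (fun t => t + c) ?_ ?_ ?_ ?_ ?_ <;>
    simp only [Finset.mem_Icc] <;> intro x hx
  · omega
  · omega
  · omega
  · omega
  · trivial

lemma sum_Icc_split' (f : ℕ → ℕ) (a m m' b : ℕ) (hm : m' = m + 1)
    (h1 : a ≤ m') (h2 : m ≤ b) :
    ∑ t ∈ Finset.Icc a b, f t =
      ∑ t ∈ Finset.Icc a m, f t + ∑ t ∈ Finset.Icc m' b, f t := by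
  subst hm
  rw [← Finset.sum_union]
  · congr 1
    ext t
    simp only [Finset.mem_union, Finset.mem_Icc]
    omega
  · rw [Finset.disjoint_left]
    simp only [Finset.mem_Icc]; intros; omega

lemma key (k l i j : ℕ) (d e : ℕ → ℕ) (hk : 2 ≤ k) (hl : 2 ≤ l)
    (hi1 : 1 ≤ i) (hik : i ≤ k) (hj1 : 1 ≤ j) (hj2 : j ≤ k + l - 2) :
    partcomp k l i (toPart (k - 1) d) (toPart (l - 1) e) j
      = toPart (k + l - 2) (dcomp l i d e) j := by
  unfold partcomp toPart
  by_cases hik1 : i ≤ k - 1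
  · rw [if_pos hik1]
    by_cases h1 : j < i
    · rw [if_pos h1]
      rw [sum_Icc_split' (dcomp l i d e) j (i - 1) i (k + l - 2) (by omega)
            (by omega) (by omega),
          sum_Icc_split' (dcomp l i d e) i (i + l - 2) (i + l - 1) (k + l - 2)
            (by omega) (by omega) (by omega)]
      have hS1 : ∑ t ∈ Finset.Icc j (i - 1), dcomp l i d e t
          = ∑ t ∈ Finset.Icc j (i - 1), d t := by
        refine Finset.sum_congr rfl fun t ht => ?_
        simp only [Finset.mem_Icc] at ht
        unfold dcomp
        rw [if_pos (by omega)]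
      have hS2 : ∑ t ∈ Finset.Icc i (i + l - 2), dcomp l i d e t
          = ∑ t ∈ Finset.Icc 1 (l - 1), e t := by
        rw [show ∑ t ∈ Finset.Icc i (i + l - 2), dcomp l i d e t
            = ∑ t ∈ Finset.Icc i (i + l - 2), e (t - (i - 1)) from
          Finset.sum_congr rfl fun t ht => by
            simp only [Finset.mem_Icc] at ht
            unfold dcomp
            rw [if_neg (by omega), if_pos (by omega)]
            congr 1
            omega]
        exact sum_Icc_shift' e i (i + l - 2) (i - 1) 1 (l - 1)
          (by omega) (by omega) (by omega) (by omega)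
      have hS3 : ∑ t ∈ Finset.Icc (i + l - 1) (k + l - 2), dcomp l i d e t
          = ∑ t ∈ Finset.Icc i (k - 1), d t := by
        rw [show ∑ t ∈ Finset.Icc (i + l - 1) (k + l - 2), dcomp l i d e t
            = ∑ t ∈ Finset.Icc (i + l - 1) (k + l - 2), d (t - (l - 1)) from
          Finset.sum_congr rfl fun t ht => by
            simp only [Finset.mem_Icc] at ht
            unfold dcomp
            rw [if_neg (by omega), if_neg (by omega)]
            congr 1
            omega]
        exact sum_Icc_shift' d (i + l - 1) (k + l - 2) (l - 1) i (k - 1)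
          (by omega) (by omega) (by omega) (by omega)
      rw [hS1, hS2, hS3,
        sum_Icc_split' d j (i - 1) i (k - 1) (by omega) (by omega) (by omega)]
      ring
    · rw [if_neg h1]
      by_cases h2 : j ≤ i + l - 2
      · rw [if_pos h2]
        rw [sum_Icc_split' (dcomp l i d e) j (i + l - 2) (i + l - 1) (k + l - 2)
              (by omega) (by omega) (by omega)]
        have hS2 : ∑ t ∈ Finset.Icc j (i + l - 2), dcomp l i d e t
            = ∑ t ∈ Finset.Icc (j - i + 1) (l - 1), e t := by
          rw [show ∑ t ∈ Finset.Icc j (i + l - 2), dcomp l i d e t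
              = ∑ t ∈ Finset.Icc j (i + l - 2), e (t - (i - 1)) from
            Finset.sum_congr rfl fun t ht => by
              simp only [Finset.mem_Icc] at ht
              unfold dcomp
              rw [if_neg (by omega), if_pos (by omega)]
              congr 1
              omega]
          exact sum_Icc_shift' e j (i + l - 2) (i - 1) (j - i + 1) (l - 1)
            (by omega) (by omega) (by omega) (by omega)
        have hS3 : ∑ t ∈ Finset.Icc (i + l - 1) (k + l - 2), dcomp l i d e t
            = ∑ t ∈ Finset.Icc i (k - 1), d t := by
          rw [show ∑ t ∈ Finset.Icc (i + l - 1) (k + l - 2), dcomp l i d e t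
              = ∑ t ∈ Finset.Icc (i + l - 1) (k + l - 2), d (t - (l - 1)) from
            Finset.sum_congr rfl fun t ht => by
              simp only [Finset.mem_Icc] at ht
              unfold dcomp
              rw [if_neg (by omega), if_neg (by omega)]
              congr 1
              omega]
          exact sum_Icc_shift' d (i + l - 1) (k + l - 2) (l - 1) i (k - 1)
            (by omega) (by omega) (by omega) (by omega)
        rw [hS2, hS3]
        ring
      · rw [if_neg h2]
        rw [show ∑ t ∈ Finset.Icc j (k + l - 2), dcomp l i d e t
            = ∑ t ∈ Finset.Icc j (k + l - 2), d (t - (l - 1)) from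
          Finset.sum_congr rfl fun t ht => by
            simp only [Finset.mem_Icc] at ht
            unfold dcomp
            rw [if_neg (by omega), if_neg (by omega)]
            congr 1
            omega]
        exact (sum_Icc_shift' d j (k + l - 2) (l - 1) (j - l + 1) (k - 1)
          (by omega) (by omega) (by omega) (by omega)).symm
  · rw [if_neg hik1]
    have hik' : i = k := by omega
    subst hik'
    by_cases h1 : j < i
    · rw [if_pos h1]
      rw [sum_Icc_split' (dcomp l i d e) j (i - 1) i (i + l - 2) (by omega)
            (by omega) (by omega)]
      have hS1 : ∑ t ∈ Finset.Icc j (i - 1), dcomp l i d e t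
          = ∑ t ∈ Finset.Icc j (i - 1), d t := by
        refine Finset.sum_congr rfl fun t ht => ?_
        simp only [Finset.mem_Icc] at ht
        unfold dcomp
        rw [if_pos (by omega)]
      have hS2 : ∑ t ∈ Finset.Icc i (i + l - 2), dcomp l i d e t
          = ∑ t ∈ Finset.Icc 1 (l - 1), e t := by
        rw [show ∑ t ∈ Finset.Icc i (i + l - 2), dcomp l i d e t
            = ∑ t ∈ Finset.Icc i (i + l - 2), e (t - (i - 1)) from
          Finset.sum_congr rfl fun t ht => by
            simp only [Finset.mem_Icc] at ht
            unfold dcomp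
            rw [if_neg (by omega), if_pos (by omega)]
            congr 1
            omega]
        exact sum_Icc_shift' e i (i + l - 2) (i - 1) 1 (l - 1)
          (by omega) (by omega) (by omega) (by omega)
      rw [hS1, hS2]
    · rw [if_neg h1]
      rw [show ∑ t ∈ Finset.Icc j (i + l - 2), dcomp l i d e t
          = ∑ t ∈ Finset.Icc j (i + l - 2), e (t - (i - 1)) from
        Finset.sum_congr rfl fun t ht => by
          simp only [Finset.mem_Icc] at ht
          unfold dcomp
          rw [if_neg (by omega), if_pos (by omega)]
          congr 1
          omega]
      exact (sum_Icc_shift' e j (i + l - 2) (i - 1) (j - i + 1) (l - 1)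
        (by omega) (by omega) (by omega) (by omega)).symm

/-- the composition of partitions is again a weakly decreasing
positive tuple (an integer partition of length `k + l - 2`), and it corresponds
to the gap-insertion composition of tuples under the bijection
`λ_j = d_j + … + d_{k-1}`. -/
theorem stmt19 (k l i : ℕ) (d e : ℕ → ℕ)
    (hk : 2 ≤ k) (hl : 2 ≤ l) (hi1 : 1 ≤ i) (hik : i ≤ k)
    (hd : 1 ≤ d (k - 1)) (he : 1 ≤ e (l - 1))
    (a b : ℕ → ℕ) (hab : a = toPart (k - 1) d) (hbb : b = toPart (l - 1) e) :
    (∀ j : ℕ, 1 ≤ j → j ≤ k + l - 2 → 1 ≤ partcomp k l i a b j) ∧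
    (∀ j : ℕ, 1 ≤ j → j + 1 ≤ k + l - 2 →
      partcomp k l i a b (j + 1) ≤ partcomp k l i a b j) ∧
    (∀ j : ℕ, 1 ≤ j → j ≤ k + l - 2 →
      partcomp k l i a b j = toPart (k + l - 2) (dcomp l i d e) j) := by
  subst hab hbb
  have hkey : ∀ j : ℕ, 1 ≤ j → j ≤ k + l - 2 →
      partcomp k l i (toPart (k - 1) d) (toPart (l - 1) e) j
        = toPart (k + l - 2) (dcomp l i d e) j :=
    fun j hj1 hj2 => key k l i j d e hk hl hi1 hik hj1 hj2
  have hFn : 1 ≤ dcomp l i d e (k + l - 2) := by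
    unfold dcomp
    by_cases hc : i ≤ k - 1
    · rw [if_neg (by omega), if_neg (by omega)]
      rwa [show k + l - 2 - l + 1 = k - 1 by omega]
    · rw [if_neg (by omega), if_pos (by omega)]
      rwa [show k + l - 2 - i + 1 = l - 1 by omega]
  refine ⟨fun j hj1 hj2 => ?_, fun j hj1 hj2 => ?_, hkey⟩
  · rw [hkey j hj1 hj2]
    calc 1 ≤ dcomp l i d e (k + l - 2) := hFn
      _ ≤ toPart (k + l - 2) (dcomp l i d e) j :=
        Finset.single_le_sum (fun t _ => Nat.zero_le _)
          (Finset.mem_Icc.mpr ⟨hj2, le_refl _⟩)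
  · rw [hkey j hj1 (by omega), hkey (j + 1) (by omega) hj2]
    exact Finset.sum_le_sum_of_subset (Finset.Icc_subset_Icc_left (by omega))
end
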